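/- Let d ≥ 3 and let γ ∈ P_{W_d} be absolutely continuous with respect to Lebesgue measure on [0,∞). Let ψ = W_d γ be the induced normalized d-monotone generator, C = C_ψ the induced copula and μ_C the associated measure on [0,1]^d. Then μ_C is absolutely continuous with respect to Lebesgue measure λ_d on [0,1]^d. -/

import Mathlib

/-!
Let `n = d - 1`, let `T` have law `γ`, put `R = 1 / T`, and let `S` be uniform on the unit simplex
of `ℝ^d`, independent of `T`. With `ψ = W_d γ` and `φ` its pseudo-inverse, the vector
`X = (ψ (R S₀), …, ψ (R Sₙ))` has distribution function `C_ψ` on `[0,1]^d`: given `T = t`, the event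
`X ≤ x` says `S ≥ t φ(x)`, a shifted simplex of probability `(1 - t ∑ φ(xⱼ))₊ⁿ`, and integrating
over `t` gives `ψ (∑ φ(xⱼ))`. So `μ_C` is the law of `X`.

Because `γ` has no atoms, `ψ R > 0` almost surely. On `{R ≤ b}` with `ψ b > 0` the Williamson
integral gives `ψ u - ψ v ≥ c (v - u)` on `[0, b]`, so `φ` is Lipschitz on `[ψ b, 1]` and `X`
determines `(R S₀, …, R Sₙ₋₁, R)` through a Lipschitz map. That vector has an absolutely
continuous law: `1 / R ~ γ ≪ λ`, and given `R` its first coordinates are `R` times a uniform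
point of a simplex. Lipschitz maps send null sets to null sets, hence `μ_C ≪ λ_d`.
-/

open MeasureTheory Set Filter Topology
open scoped ENNReal NNReal Classical

noncomputable section

/-- Extension of a generator `ψ` to `[0,∞]` with the convention `ψ(∞) := 0`. -/
def psiExt (ψ : ℝ → ℝ) (z : ℝ≥0∞) : ℝ := if z = ∞ then 0 else ψ z.toReal

/-- The pseudo-inverse `φ(y) = inf {z ∈ [0,∞] : ψ(z) = y}` of a generator. -/
def pseudoInv (ψ : ℝ → ℝ) (y : ℝ) : ℝ≥0∞ := sInf {z : ℝ≥0∞ | psiExt ψ z = y}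

/-- An Archimedean generator: `ψ : [0,∞) → [0,1]` is continuous, non-increasing,
satisfies `ψ 0 = 1` and `ψ(z) → 0` as `z → ∞`, and is strictly decreasing on
`[0, inf {z ∈ [0,∞] : ψ z = 0}]`. -/
structure IsGenerator (ψ : ℝ → ℝ) : Prop where
  continuousOn : ContinuousOn ψ (Ici 0)
  mem_Icc : ∀ z : ℝ, 0 ≤ z → ψ z ∈ Icc (0 : ℝ) 1
  map_zero : ψ 0 = 1
  tendsto_atTop : Tendsto ψ atTop (𝓝 0)
  antitoneOn : AntitoneOn ψ (Ici 0)
  strictAnti : ∀ ⦃x y : ℝ⦄, 0 ≤ x → x < y → ENNReal.ofReal y ≤ pseudoInv ψ 0 → ψ y < ψ x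

/-- The left-hand derivative `D⁻f`. -/
def leftDeriv (f : ℝ → ℝ) (z : ℝ) : ℝ := derivWithin f (Iio z) z

/-- The right-hand derivative `D⁺f`. -/
def rightDeriv (f : ℝ → ℝ) (z : ℝ) : ℝ := derivWithin f (Ioi z) z

/-- A `d`-monotone Archimedean generator: the derivatives `ψ⁽ᵏ⁾` exist on `(0,∞)` for
`k = 1,…,d-2`, and `(-1)^(d-2) · ψ^(d-2)` is non-negative, non-increasing and convex
on `(0,∞)`. -/
structure IsdMonotoneGenerator (d : ℕ) (ψ : ℝ → ℝ) : Prop where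
  toIsGenerator : IsGenerator ψ
  differentiable : ∀ k : ℕ, k < d - 2 → ∀ z : ℝ, 0 < z → DifferentiableAt ℝ (deriv^[k] ψ) z
  nonneg : ∀ z : ℝ, 0 < z → 0 ≤ (-1 : ℝ) ^ (d - 2) * deriv^[d - 2] ψ z
  antitoneOn : AntitoneOn (fun z => (-1 : ℝ) ^ (d - 2) * deriv^[d - 2] ψ z) (Ioi 0)
  convexOn : ConvexOn ℝ (Ioi 0) (fun z => (-1 : ℝ) ^ (d - 2) * deriv^[d - 2] ψ z)

/-- The `d`-dimensional Archimedean copula generated by `ψ`: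
`C_ψ(x) = ψ(φ(x₁) + ⋯ + φ(x_d))` (with `ψ(∞) := 0`). -/
def archCopula (d : ℕ) (ψ : ℝ → ℝ) (x : Fin d → ℝ) : ℝ :=
  psiExt ψ (∑ i, pseudoInv ψ (x i))

/-- A generator is strict if `ψ(z) > 0` for all `z ≥ 0`. -/
def IsStrictGenerator (ψ : ℝ → ℝ) : Prop := ∀ z : ℝ, 0 ≤ z → 0 < ψ z

/-- The level set `L_t = {x ∈ [0,1]^d : C_ψ(x) = t}`. -/
def levelSet (d : ℕ) (ψ : ℝ → ℝ) (t : ℝ) : Set (Fin d → ℝ) :=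
  {x | (∀ i, x i ∈ Icc (0 : ℝ) 1) ∧ archCopula d ψ x = t}

/-- The Williamson transform `(W_d γ)(z) = ∫ (1 - tz)₊^(d-1) dγ(t)`. -/
def williamson (d : ℕ) (γ : Measure ℝ) (z : ℝ) : ℝ :=
  ∫ t, max (1 - t * z) 0 ^ (d - 1) ∂γ

/-- The class `P_{W_d}`: Borel probability measures on `[0,∞)` with `γ({0}) = 0` and
`∫_{[0,1]} (1-t)^(d-1) dγ(t) = 1/2`. -/
def memPW (d : ℕ) (γ : Measure ℝ) : Prop :=
  IsProbabilityMeasure γ ∧ γ (Iio 0) = 0 ∧ γ {0} = 0 ∧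
    ∫ t in Icc (0 : ℝ) 1, (1 - t) ^ (d - 1) ∂γ = 1 / 2

open scoped Nat

lemma mul_pow_mul_sub_le_pow_sub_pow {a c : ℝ} (hc : 0 ≤ c) (hca : c ≤ a) (k : ℕ) :
    (k + 1) * c ^ k * (a - c) ≤ a ^ (k + 1) - c ^ (k + 1) := by
  have hterm : ∀ i ∈ Finset.range (k + 1), c ^ k ≤ a ^ i * c ^ (k - i) := fun i hi => by
    calc c ^ k = c ^ i * c ^ (k - i) := by
          rw [← pow_add, Nat.add_sub_cancel' (Nat.lt_succ_iff.mp (Finset.mem_range.mp hi))]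
      _ ≤ a ^ i * c ^ (k - i) := by gcongr
  have hsum := Finset.card_nsmul_le_sum _ _ _ hterm
  rw [Finset.card_range, nsmul_eq_mul] at hsum
  rw [← geom_sum₂_mul]
  simp only [Nat.add_sub_cancel] at hsum ⊢
  push_cast at hsum
  exact mul_le_mul_of_nonneg_right hsum (sub_nonneg.2 hca)

lemma mul_max_pow_le_max_pow_sub_max_pow {t u v b : ℝ} (ht : 0 ≤ t) (huv : u ≤ v) (hvb : v ≤ b)
    {k : ℕ} (hk : k ≠ 0) :
    (k + 1) * (t * (v - u)) * max (1 - t * b) 0 ^ k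
      ≤ max (1 - t * u) 0 ^ (k + 1) - max (1 - t * v) 0 ^ (k + 1) := by
  rcases le_or_gt (t * v) 1 with htv | htv
  · have htuv : t * u ≤ t * v := mul_le_mul_of_nonneg_left huv ht
    have htvb : t * v ≤ t * b := mul_le_mul_of_nonneg_left hvb ht
    rw [max_eq_left (by linarith : 0 ≤ 1 - t * u), max_eq_left (by linarith : 0 ≤ 1 - t * v)]
    calc (k + 1) * (t * (v - u)) * max (1 - t * b) 0 ^ k
        ≤ (k + 1) * (1 - t * v) ^ k * ((1 - t * u) - (1 - t * v)) := by
          rw [mul_right_comm, show (1 - t * u) - (1 - t * v) = t * (v - u) by ring]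
          gcongr
          exact max_le (by linarith) (by linarith)
      _ ≤ (1 - t * u) ^ (k + 1) - (1 - t * v) ^ (k + 1) :=
          mul_pow_mul_sub_le_pow_sub_pow (by linarith) (by linarith) k
  · have htb : 1 < t * b := htv.trans_le (mul_le_mul_of_nonneg_left hvb ht)
    rw [max_eq_right (by linarith : 1 - t * b ≤ 0), max_eq_right (by linarith : 1 - t * v ≤ 0),
      zero_pow hk, zero_pow (Nat.succ_ne_zero k), mul_zero, sub_zero]
    positivity

lemma ae_measure_Iio_pos {γ : Measure ℝ} [NullSingletonClass γ] : ∀ᵐ t ∂γ, 0 < γ (Iio t) := by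
  have hsub : (γ.support ∩ {t | γ (Iio t) = 0}).Subsingleton := by
    intro x hx y hy
    by_contra hne
    wlog hxy : x < y generalizing x y
    · exact this hy hx (Ne.symm hne) ((not_lt.1 hxy).lt_of_ne (Ne.symm hne))
    have hpos := (Measure.mem_support_iff_forall x).1 hx.1 (Iio y) (Iio_mem_nhds hxy)
    exact hpos.ne' hy.2
  filter_upwards [Measure.support_mem_ae, measure_eq_zero_iff_ae_notMem.1 (hsub.measure_zero γ)]
    with t ht hnot
  exact pos_iff_ne_zero.2 fun h => hnot ⟨ht, h⟩

section Williamson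

variable {γ : Measure ℝ} {d : ℕ}

lemma ae_nonneg_of_measure_Iio_zero (h0 : γ (Iio 0) = 0) : ∀ᵐ t ∂γ, 0 ≤ t := by
  simpa [ae_iff, Iio_def] using h0

lemma ae_pos_of_measure_Iio_zero (h0 : γ (Iio 0) = 0) (hz : γ {0} = 0) : ∀ᵐ t ∂γ, 0 < t := by
  filter_upwards [ae_nonneg_of_measure_Iio_zero h0, measure_eq_zero_iff_ae_notMem.1 hz]
    with t ht ht0
  exact ht.lt_of_ne (Ne.symm ht0)

lemma integrable_max_one_sub_mul_pow [IsFiniteMeasure γ] (h0 : γ (Iio 0) = 0) {z : ℝ}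
    (hz : 0 ≤ z) (m : ℕ) : Integrable (fun t => max (1 - t * z) 0 ^ m) γ := by
  refine (integrable_const (1 : ℝ)).mono' (by fun_prop) ?_
  filter_upwards [ae_nonneg_of_measure_Iio_zero h0] with t ht
  rw [Real.norm_eq_abs, abs_of_nonneg (by positivity)]
  exact pow_le_one₀ (le_max_right _ _) (max_le (by nlinarith) zero_le_one)

lemma williamson_nonneg (z : ℝ) : 0 ≤ williamson d γ z :=
  integral_nonneg fun _ => by positivity

lemma williamson_zero [IsProbabilityMeasure γ] : williamson d γ 0 = 1 := by
  simp [williamson]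

lemma antitoneOn_williamson [IsFiniteMeasure γ] (h0 : γ (Iio 0) = 0) :
    AntitoneOn (williamson d γ) (Ici 0) := fun u hu v _ huv =>
  integral_mono_ae (integrable_max_one_sub_mul_pow h0 (hu.trans huv) _)
    (integrable_max_one_sub_mul_pow h0 hu _) <| by
    filter_upwards [ae_nonneg_of_measure_Iio_zero h0] with t ht
    exact pow_le_pow_left₀ (le_max_right _ _) (max_le_max (by nlinarith) le_rfl) _

lemma continuousOn_williamson [IsFiniteMeasure γ] (h0 : γ (Iio 0) = 0) :
    ContinuousOn (williamson d γ) (Ici 0) := fun z _ => by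
  refine tendsto_integral_filter_of_dominated_convergence (fun _ => 1)
    (Eventually.of_forall fun _ => by fun_prop) ?_ (integrable_const 1)
    (Eventually.of_forall fun t => ((by fun_prop : Continuous fun u : ℝ =>
      max (1 - t * u) 0 ^ (d - 1)).tendsto z).mono_left nhdsWithin_le_nhds)
  filter_upwards [self_mem_nhdsWithin] with u hu
  filter_upwards [ae_nonneg_of_measure_Iio_zero h0] with t ht
  rw [Real.norm_eq_abs, abs_of_nonneg (by positivity)]
  exact pow_le_one₀ (le_max_right _ _) (max_le (by nlinarith [mem_Ici.1 hu]) zero_le_one)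

lemma measurable_williamson [SFinite γ] : Measurable (williamson d γ) :=
  (Continuous.stronglyMeasurable (by fun_prop :
    Continuous fun q : ℝ × ℝ => max (1 - q.2 * q.1) 0 ^ (d - 1))).integral_prod_right'.measurable

lemma williamson_pos_iff [IsFiniteMeasure γ] (h0 : γ (Iio 0) = 0) (hd : 2 ≤ d) {z : ℝ}
    (hz : 0 ≤ z) : 0 < williamson d γ z ↔ 0 < γ {t | t * z < 1} := by
  have hsupp : Function.support (fun t => max (1 - t * z) 0 ^ (d - 1)) = {t | t * z < 1} := by
    ext t
    simp only [Function.mem_support, mem_ofPred_eq, ne_eq, pow_eq_zero_iff (by omega : d - 1 ≠ 0)]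
    constructor
    · intro h; by_contra h'; exact h (max_eq_right (by linarith))
    · intro h h'; linarith [le_max_left (1 - t * z) 0, h'.le]
  rw [williamson, integral_pos_iff_support_of_nonneg (fun _ => by positivity)
    (integrable_max_one_sub_mul_pow h0 hz _), hsupp]

lemma integrable_mul_max_one_sub_mul_pow [IsFiniteMeasure γ] (h0 : γ (Iio 0) = 0) {b : ℝ}
    (hb : 0 < b) {m : ℕ} (hm : m ≠ 0) : Integrable (fun t => t * max (1 - t * b) 0 ^ m) γ := by
  refine (integrable_const b⁻¹).mono' (by fun_prop) ?_
  filter_upwards [ae_nonneg_of_measure_Iio_zero h0] with t ht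
  rw [Real.norm_eq_abs, abs_of_nonneg (by positivity)]
  rcases le_or_gt (t * b) 1 with htb | htb
  · calc t * max (1 - t * b) 0 ^ m ≤ t * 1 :=
          mul_le_mul_of_nonneg_left (pow_le_one₀ (le_max_right _ _)
            (max_le (by nlinarith) zero_le_one)) ht
      _ ≤ b⁻¹ := by rw [mul_one, ← one_div, le_div_iff₀ hb]; exact htb
  · rw [max_eq_right (by linarith), zero_pow hm, mul_zero]
    positivity

lemma integral_mul_max_one_sub_mul_pow_pos [IsFiniteMeasure γ] (h0 : γ (Iio 0) = 0)
    (hz : γ {0} = 0) {b : ℝ} (hb : 0 < b) {m : ℕ} (hm : m ≠ 0)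
    (hpos : 0 < γ {t | t * b < 1}) : 0 < ∫ t, t * max (1 - t * b) 0 ^ m ∂γ := by
  have hnonneg : 0 ≤ᵐ[γ] fun t => t * max (1 - t * b) 0 ^ m := by
    filter_upwards [ae_nonneg_of_measure_Iio_zero h0] with t ht
    positivity
  rw [integral_pos_iff_support_of_nonneg_ae hnonneg (integrable_mul_max_one_sub_mul_pow h0 hb hm)]
  refine hpos.trans_le (measure_mono_ae ?_)
  filter_upwards [ae_pos_of_measure_Iio_zero h0 hz] with t ht (htb : t * b < 1)
  have hpos : 0 < 1 - t * b := by linarith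
  exact mul_ne_zero ht.ne' (pow_ne_zero _ (by rw [max_eq_left hpos.le]; exact hpos.ne'))

/-- The rate is `(d - 1) ∫ t (1 - t b)₊^(d-2) dγ`, a lower bound for `-ψ'` on `[0, b]`. -/
lemma exists_pos_mul_sub_le_williamson_sub [IsFiniteMeasure γ] (h0 : γ (Iio 0) = 0)
    (hz : γ {0} = 0) (hd : 3 ≤ d) {b : ℝ} (hb : 0 < b) (hψb : 0 < williamson d γ b) :
    ∃ c > 0, ∀ u v, 0 ≤ u → u ≤ v → v ≤ b →
      c * (v - u) ≤ williamson d γ u - williamson d γ v := by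
  obtain ⟨k, rfl⟩ : ∃ k, d = k + 3 := ⟨d - 3, by omega⟩
  have hint := integrable_mul_max_one_sub_mul_pow h0 hb (m := k + 1) (Nat.succ_ne_zero k)
  refine ⟨(k + 2) * ∫ t, t * max (1 - t * b) 0 ^ (k + 1) ∂γ,
    mul_pos (by positivity) (integral_mul_max_one_sub_mul_pow_pos h0 hz hb (m := k + 1)
      (Nat.succ_ne_zero k) ((williamson_pos_iff h0 (by omega) hb.le).1 hψb)),
    fun u v hu huv hvb => ?_⟩
  have hu_int := integrable_max_one_sub_mul_pow h0 hu (k + 3 - 1)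
  have hv_int := integrable_max_one_sub_mul_pow h0 (hu.trans huv) (k + 3 - 1)
  rw [williamson, williamson, ← integral_sub hu_int hv_int, ← integral_const_mul,
    ← integral_mul_const]
  refine integral_mono_ae ((hint.const_mul _).mul_const _) (hu_int.sub hv_int) ?_
  filter_upwards [ae_nonneg_of_measure_Iio_zero h0] with t ht
  have key := mul_max_pow_le_max_pow_sub_max_pow ht huv hvb (k := k + 1) (Nat.succ_ne_zero k)
  push_cast at key
  simp only [show k + 3 - 1 = k + 1 + 1 from rfl]
  linarith [key]

lemma ae_pos_and_williamson_inv_pos [IsFiniteMeasure γ] (h0 : γ (Iio 0) = 0)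
    (hac : γ ≪ volume) (hd : 2 ≤ d) : ∀ᵐ t ∂γ, 0 < t ∧ 0 < williamson d γ t⁻¹ := by
  have : NullSingletonClass γ := ⟨fun _ => hac Real.volume_singleton⟩
  filter_upwards [ae_pos_of_measure_Iio_zero h0 (hac Real.volume_singleton), ae_measure_Iio_pos]
    with t htpos hIio
  refine ⟨htpos, (williamson_pos_iff h0 hd (inv_nonneg.2 htpos.le)).2
    (hIio.trans_le (measure_mono ?_))⟩
  intro u hu
  rw [mem_ofPred_eq, ← div_eq_mul_inv, div_lt_one htpos]
  exact hu

end Williamson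

section PseudoInverse

variable {ψ : ℝ → ℝ}

lemma pseudoInv_le_ofReal {y r : ℝ} (hr : 0 ≤ r) (h : ψ r = y) :
    pseudoInv ψ y ≤ ENNReal.ofReal r :=
  sInf_le (by simp [psiExt, ENNReal.toReal_ofReal hr, h])

lemma apply_toReal_pseudoInv (hcont : ContinuousOn ψ (Ici 0)) {y : ℝ} (h : pseudoInv ψ y ≠ ∞) :
    ψ (pseudoInv ψ y).toReal = y := by
  have hne : {z : ℝ≥0∞ | psiExt ψ z = y}.Nonempty := by
    by_contra hem
    exact h (by rw [pseudoInv, not_nonempty_iff_eq_empty.1 hem, sInf_empty])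
  obtain ⟨u, -, hu, hmem⟩ := exists_seq_tendsto_sInf hne (OrderBot.bddBelow _)
  have hval : ∀ᶠ n in atTop, ψ (u n).toReal = y := by
    filter_upwards [hu.eventually (gt_mem_nhds (lt_top_iff_ne_top.2 h))] with n hn
    simpa [psiExt, hn.ne] using hmem n
  have hlim : Tendsto (fun n => ψ (u n).toReal) atTop (𝓝 (ψ (pseudoInv ψ y).toReal)) :=
    (hcont _ ENNReal.toReal_nonneg).tendsto.comp <| tendsto_nhdsWithin_iff.2
      ⟨(ENNReal.tendsto_toReal h).comp hu, Eventually.of_forall fun _ => ENNReal.toReal_nonneg⟩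
  exact tendsto_nhds_unique hlim (tendsto_const_nhds.congr' (hval.mono fun _ h => h.symm))

lemma le_iff_pseudoInv_le (hcont : ContinuousOn ψ (Ici 0)) (hanti : AntitoneOn ψ (Ici 0))
    {y z : ℝ} (hy : y ≤ ψ 0) (hz : 0 ≤ z) : ψ z ≤ y ↔ pseudoInv ψ y ≤ ENNReal.ofReal z := by
  constructor
  · intro h
    obtain ⟨r, hr, hry⟩ := intermediate_value_Icc' hz (hcont.mono Icc_subset_Ici_self) ⟨h, hy⟩
    exact (pseudoInv_le_ofReal hr.1 hry).trans (ENNReal.ofReal_le_ofReal hr.2)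
  · intro h
    have hfin : pseudoInv ψ y ≠ ∞ := ne_top_of_le_ne_top ENNReal.ofReal_ne_top h
    calc ψ z ≤ ψ (pseudoInv ψ y).toReal :=
          hanti ENNReal.toReal_nonneg hz (ENNReal.toReal_le_of_le_ofReal hz h)
      _ = y := apply_toReal_pseudoInv hcont hfin

lemma pseudoInv_apply_eq_ofReal (hcont : ContinuousOn ψ (Ici 0)) {v : ℝ} (hv : 0 ≤ v)
    (hstrict : ∀ u, 0 ≤ u → u < v → ψ v < ψ u) : pseudoInv ψ (ψ v) = ENNReal.ofReal v := by
  refine (pseudoInv_le_ofReal hv rfl).antisymm (not_lt.1 fun hlt => ?_)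
  have hfin := hlt.ne_top
  have hu : (pseudoInv ψ (ψ v)).toReal < v := by
    simpa [ENNReal.toReal_ofReal hv] using
      (ENNReal.toReal_lt_toReal hfin ENNReal.ofReal_ne_top).2 hlt
  have := hstrict _ ENNReal.toReal_nonneg hu
  rw [apply_toReal_pseudoInv hcont hfin] at this
  exact lt_irrefl _ this

lemma lipschitzOnWith_pseudoInv (hcont : ContinuousOn ψ (Ici 0)) (hanti : AntitoneOn ψ (Ici 0))
    {b c : ℝ} (hb : 0 ≤ b) (hc : 0 < c)
    (hdec : ∀ u v, 0 ≤ u → u ≤ v → v ≤ b → c * (v - u) ≤ ψ u - ψ v) :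
    LipschitzOnWith (Real.toNNReal c⁻¹) (fun y => (pseudoInv ψ y).toReal) (Icc (ψ b) (ψ 0)) := by
  have hle : ∀ y ∈ Icc (ψ b) (ψ 0), pseudoInv ψ y ≤ ENNReal.ofReal b := fun y hy =>
    (le_iff_pseudoInv_le hcont hanti hy.2 hb).1 hy.1
  have hfin : ∀ y ∈ Icc (ψ b) (ψ 0), pseudoInv ψ y ≠ ∞ := fun y hy =>
    ne_top_of_le_ne_top ENNReal.ofReal_ne_top (hle y hy)
  have key : ∀ y ∈ Icc (ψ b) (ψ 0), ∀ y' ∈ Icc (ψ b) (ψ 0), y' ≤ y →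
      |(pseudoInv ψ y).toReal - (pseudoInv ψ y').toReal| ≤ c⁻¹ * |y - y'| := by
    intro y hy y' hy' hyy'
    set u := (pseudoInv ψ y).toReal
    set u' := (pseudoInv ψ y').toReal
    have hψu' : ψ u' = y' := apply_toReal_pseudoInv hcont (hfin y' hy')
    have huu' : u ≤ u' := ENNReal.toReal_le_of_le_ofReal ENNReal.toReal_nonneg <|
      (le_iff_pseudoInv_le hcont hanti hy.2 ENNReal.toReal_nonneg).1 (hψu'.trans_le hyy')
    have hdiff := hdec u u' ENNReal.toReal_nonneg huu'
      (ENNReal.toReal_le_of_le_ofReal hb (hle y' hy'))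
    rw [apply_toReal_pseudoInv hcont (hfin y hy), hψu'] at hdiff
    rw [abs_of_nonpos (by linarith), abs_of_nonneg (by linarith), le_inv_mul_iff₀ hc]
    linarith
  refine LipschitzOnWith.of_dist_le_mul fun y hy y' hy' => ?_
  rw [Real.dist_eq, Real.dist_eq, Real.coe_toNNReal _ (inv_nonneg.2 hc.le)]
  rcases le_total y' y with h | h
  · exact key y hy y' hy' h
  · rw [abs_sub_comm, abs_sub_comm y]
    exact key y' hy' y hy h

lemma exists_rat_ge_apply_pos (hcont : ContinuousOn ψ (Ici 0)) (hanti : AntitoneOn ψ (Ici 0))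
    {z : ℝ} (hz : 0 < z) (hψz : 0 < ψ z) : ∃ q : ℚ, z ≤ q ∧ 0 < ψ q := by
  have hev : ∀ᶠ w in 𝓝[>] z, 0 < ψ w :=
    ((hcont.continuousAt (Ici_mem_nhds hz)).eventually (lt_mem_nhds hψz)).filter_mono
      nhdsWithin_le_nhds
  obtain ⟨b, hψb, hzb⟩ := (hev.and self_mem_nhdsWithin).exists
  obtain ⟨q, hzq, hqb⟩ := exists_rat_btwn hzb
  exact ⟨q, hzq.le, hψb.trans_le (hanti (hz.trans hzq).le (hz.trans hzb).le hqb.le)⟩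

lemma mem_pi_Icc_iff_pseudoInv_le {ι : Type*} (hcont : ContinuousOn ψ (Ici 0))
    (hanti : AntitoneOn ψ (Ici 0)) (hnonneg : ∀ z, 0 ≤ ψ z) {x v : ι → ℝ}
    (hx : ∀ j, x j ≤ ψ 0) (hv : ∀ j, 0 ≤ v j) :
    (fun j => ψ (v j)) ∈ univ.pi (fun j => Icc 0 (x j)) ↔
      ∀ j, pseudoInv ψ (x j) ≤ ENNReal.ofReal (v j) := by
  simp only [mem_univ_pi, mem_Icc, hnonneg, true_and]
  exact forall_congr' fun j => le_iff_pseudoInv_le hcont hanti (hx j) (hv j)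

lemma archCopula_one {d : ℕ} (hψ : ψ 0 = 1) : archCopula d ψ (fun _ => 1) = 1 := by
  have h : pseudoInv ψ 1 = 0 := nonpos_iff_eq_zero.1 (by simpa using pseudoInv_le_ofReal le_rfl hψ)
  simp [archCopula, psiExt, h, hψ]

end PseudoInverse

section Simplex

def solidSimplex (n : ℕ) (c : ℝ) : Set (Fin n → ℝ) := {s | (∀ i, 0 ≤ s i) ∧ ∑ i, s i ≤ c}

lemma measurableSet_solidSimplex (n : ℕ) (c : ℝ) : MeasurableSet (solidSimplex n c) := by
  simp only [solidSimplex, ofPred_and, ofPred_forall]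
  exact (MeasurableSet.iInter fun i =>
    measurableSet_le measurable_const (measurable_pi_apply i)).inter
    (measurableSet_le (Finset.measurable_sum _ fun i _ => measurable_pi_apply i) measurable_const)

lemma solidSimplex_eq_empty {n : ℕ} {c : ℝ} (hc : c < 0) : solidSimplex n c = ∅ :=
  eq_empty_of_forall_notMem fun _ hs =>
    (Finset.sum_nonneg fun i _ => hs.1 i).not_gt (hs.2.trans_lt hc)

lemma snoc_mem_solidSimplex {n : ℕ} {c r : ℝ} {y : Fin n → ℝ} :
    (Fin.snoc y r : Fin (n + 1) → ℝ) ∈ solidSimplex (n + 1) c ↔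
      0 ≤ r ∧ y ∈ solidSimplex n (c - r) := by
  simp only [solidSimplex, mem_ofPred_eq, Fin.forall_fin_succ', Fin.snoc_castSucc, Fin.snoc_last,
    Fin.sum_univ_castSucc, le_sub_iff_add_le]
  tauto

def snocEquiv (n : ℕ) : (Fin (n + 1) → ℝ) ≃ᵐ ℝ × (Fin n → ℝ) :=
  MeasurableEquiv.piFinSuccAbove (fun _ => ℝ) (Fin.last n)

lemma snocEquiv_symm_apply (n : ℕ) (r : ℝ) (y : Fin n → ℝ) :
    (snocEquiv n).symm (r, y) = Fin.snoc y r := by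
  simp [snocEquiv, MeasurableEquiv.piFinSuccAbove_symm_apply, Fin.insertNthEquiv,
    Fin.insertNth_last']

lemma measurePreserving_snocEquiv_symm (n : ℕ) :
    MeasurePreserving (snocEquiv n).symm (volume.prod volume) volume := by
  rw [← Measure.volume_eq_prod]
  exact (volume_preserving_piFinSuccAbove (fun _ => ℝ) (Fin.last n)).symm _

lemma volume_solidSimplex (n : ℕ) {c : ℝ} (hc : 0 ≤ c) :
    volume (solidSimplex n c) = ENNReal.ofReal (c ^ n / n !) := by
  induction n generalizing c with
  | zero =>
    have : solidSimplex 0 c = univ := eq_univ_of_forall fun _ => ⟨fun i => i.elim0, by simpa⟩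
    rw [this, volume_pi, Measure.pi_univ]
    simp
  | succ n ih =>
    have hslice : ∀ r, volume (Prod.mk r ⁻¹' ((snocEquiv n).symm ⁻¹' solidSimplex (n + 1) c)) =
        (Icc 0 c).indicator (fun r => ENNReal.ofReal ((c - r) ^ n / n !)) r := by
      intro r
      have hset : Prod.mk r ⁻¹' ((snocEquiv n).symm ⁻¹' solidSimplex (n + 1) c) =
          {_y | 0 ≤ r} ∩ solidSimplex n (c - r) := by
        ext y
        simp only [mem_preimage, snocEquiv_symm_apply, snoc_mem_solidSimplex, mem_inter_iff,
          mem_ofPred_eq]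
      rw [hset]
      by_cases hr : r ∈ Icc 0 c
      · rw [indicator_of_mem hr, ← ih (sub_nonneg.2 hr.2)]
        simp [hr.1]
      · rw [indicator_of_notMem hr]
        rcases not_and_or.1 hr with hr | hr
        · simp [hr]
        · simp [solidSimplex_eq_empty (sub_neg.2 (not_le.1 hr))]
    have hmeas := (snocEquiv n).symm.measurable (measurableSet_solidSimplex (n + 1) c)
    rw [← (measurePreserving_snocEquiv_symm n).measure_preimage
      (measurableSet_solidSimplex (n + 1) c).nullMeasurableSet,
      Measure.prod_apply hmeas, lintegral_congr hslice, lintegral_indicator measurableSet_Icc,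
      ← ofReal_integral_eq_lintegral_ofReal (Continuous.integrableOn_Icc (by fun_prop))
        (ae_restrict_of_forall_mem measurableSet_Icc fun r hr => by
          have := sub_nonneg.2 hr.2
          positivity),
      integral_Icc_eq_integral_Ioc, ← intervalIntegral.integral_of_le hc,
      intervalIntegral.integral_div, intervalIntegral.integral_comp_sub_left (fun u => u ^ n) c,
      sub_self, sub_zero, integral_pow, Nat.factorial_succ]
    congr 1
    push_cast
    rw [zero_pow (Nat.succ_ne_zero n)]
    field_simp
    ring

lemma volume_setOf_le_and_sum_le {n : ℕ} (hn : n ≠ 0) (a : Fin n → ℝ) (c : ℝ) :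
    volume {s : Fin n → ℝ | (∀ i, a i ≤ s i) ∧ ∑ i, s i ≤ c} =
      ENNReal.ofReal (max (c - ∑ i, a i) 0 ^ n / n !) := by
  have hset : {s : Fin n → ℝ | (∀ i, a i ≤ s i) ∧ ∑ i, s i ≤ c} =
      (· + -a) ⁻¹' solidSimplex n (c - ∑ i, a i) := by
    ext s
    simp only [solidSimplex, mem_preimage, mem_ofPred_eq, ← sub_eq_add_neg, Pi.sub_apply,
      sub_nonneg, Finset.sum_sub_distrib, sub_le_sub_iff_right]
  rw [hset, measure_preimage_add_right]
  rcases le_or_gt 0 (c - ∑ i, a i) with h | h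
  · rw [volume_solidSimplex n h, max_eq_left h]
  · rw [solidSimplex_eq_empty h, max_eq_right h.le, zero_pow hn]
    simp

def uniformSimplex (n : ℕ) : Measure (Fin n → ℝ) :=
  (n ! : ℝ≥0∞) • volume.restrict (solidSimplex n 1)

lemma uniformSimplex_apply (n : ℕ) (A : Set (Fin n → ℝ)) :
    uniformSimplex n A = n ! * volume (A ∩ solidSimplex n 1) := by
  rw [uniformSimplex, Measure.smul_apply, Measure.restrict_apply' (measurableSet_solidSimplex n 1),
    smul_eq_mul]

instance (n : ℕ) : IsProbabilityMeasure (uniformSimplex n) := by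
  constructor
  rw [uniformSimplex_apply, univ_inter, volume_solidSimplex n zero_le_one, one_pow,
    ← ENNReal.ofReal_natCast, ← ENNReal.ofReal_mul (Nat.cast_nonneg _),
    mul_one_div_cancel (Nat.cast_ne_zero.2 n.factorial_ne_zero), ENNReal.ofReal_one]

lemma uniformSimplex_absolutelyContinuous (n : ℕ) : uniformSimplex n ≪ volume :=
  (Measure.absolutelyContinuous_of_le Measure.restrict_le_self).smul_left _

lemma ae_mem_solidSimplex (n : ℕ) : ∀ᵐ s ∂uniformSimplex n, s ∈ solidSimplex n 1 :=
  Measure.ae_smul_measure (ae_restrict_mem (measurableSet_solidSimplex n 1)) _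

end Simplex

section Representation

variable {n : ℕ}

def scaledSimplexPoint (n : ℕ) (p : ℝ × (Fin n → ℝ)) : Fin (n + 1) → ℝ :=
  p.1⁻¹ • Fin.snoc p.2 (1 - ∑ i, p.2 i)

/-- If `1 / R` has law `γ` and `S` is uniformly distributed on the unit simplex of `ℝ^(n+1)`,
parametrised by its first `n` coordinates, this is the law of `(ψ (R S₀), …, ψ (R Sₙ))`.
For `ψ = W_{n+1} γ` it is the measure of the Archimedean copula (McNeil–Nešlehová). -/
def archimedeanLaw (n : ℕ) (ψ : ℝ → ℝ) (γ : Measure ℝ) : Measure (Fin (n + 1) → ℝ) :=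
  (γ.prod (uniformSimplex n)).map fun p j => ψ (scaledSimplexPoint n p j)

lemma measurable_scaledSimplexPoint : Measurable (scaledSimplexPoint n) := by
  have : scaledSimplexPoint n =
      fun p => p.1⁻¹ • (snocEquiv n).symm (1 - ∑ i, p.2 i, p.2) := by
    ext p j
    simp [scaledSimplexPoint, snocEquiv_symm_apply]
  rw [this]
  exact measurable_fst.inv.smul <| (snocEquiv n).symm.measurable.comp <|
    (measurable_const.sub (Finset.measurable_sum _ fun i _ =>
      (measurable_pi_apply i).comp measurable_snd)).prodMk measurable_snd

lemma forall_le_scaledSimplexPoint_iff {t : ℝ} (ht : 0 < t) (a : Fin (n + 1) → ℝ)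
    (s : Fin n → ℝ) : (∀ j, a j ≤ scaledSimplexPoint n (t, s) j) ↔
      (∀ i, t * a i.castSucc ≤ s i) ∧ ∑ i, s i ≤ 1 - t * a (Fin.last n) := by
  simp only [scaledSimplexPoint, Fin.forall_fin_succ', Pi.smul_apply, smul_eq_mul,
    Fin.snoc_castSucc, Fin.snoc_last, le_inv_mul_iff₀ ht]
  constructor <;> rintro ⟨h1, h2⟩ <;> exact ⟨h1, by linarith⟩

lemma scaledSimplexPoint_mem_Icc {t : ℝ} (ht : 0 < t) {s : Fin n → ℝ}
    (hs : s ∈ solidSimplex n 1) (j : Fin (n + 1)) :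
    scaledSimplexPoint n (t, s) j ∈ Icc 0 t⁻¹ := by
  have hsnoc : (Fin.snoc s (1 - ∑ i, s i) : Fin (n + 1) → ℝ) j ∈ Icc 0 1 := by
    induction j using Fin.lastCases with
    | last => simpa [hs.2] using Finset.sum_nonneg fun i _ => hs.1 i
    | cast i =>
      simp only [Fin.snoc_castSucc]
      exact ⟨hs.1 i, (Finset.single_le_sum (fun k _ => hs.1 k) (Finset.mem_univ i)).trans hs.2⟩
  simp only [scaledSimplexPoint, Pi.smul_apply, smul_eq_mul]
  exact ⟨mul_nonneg (inv_nonneg.2 ht.le) hsnoc.1,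
    mul_le_of_le_one_right (inv_nonneg.2 ht.le) hsnoc.2⟩

lemma uniformSimplex_congr {A B : Set (Fin n → ℝ)}
    (h : ∀ s ∈ solidSimplex n 1, s ∈ A ↔ s ∈ B) : uniformSimplex n A = uniformSimplex n B := by
  rw [uniformSimplex_apply, uniformSimplex_apply]
  congr 2
  ext s
  exact and_congr_left (h s)

lemma uniformSimplex_setOf_forall_le_scaledSimplexPoint (hn : n ≠ 0) {t : ℝ} (ht : 0 < t)
    {a : Fin (n + 1) → ℝ} (ha : ∀ j, 0 ≤ a j) :
    uniformSimplex n {s | ∀ j, a j ≤ scaledSimplexPoint n (t, s) j} =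
      ENNReal.ofReal (max (1 - t * ∑ j, a j) 0 ^ n) := by
  have hsub : {s | ∀ j, a j ≤ scaledSimplexPoint n (t, s) j} ⊆ solidSimplex n 1 := by
    intro s hs
    rw [mem_ofPred_eq, forall_le_scaledSimplexPoint_iff ht] at hs
    have hlast := mul_nonneg ht.le (ha (Fin.last n))
    exact ⟨fun i => (mul_nonneg ht.le (ha _)).trans (hs.1 i), by linarith [hs.2]⟩
  simp_rw [uniformSimplex_apply, inter_eq_left.2 hsub, forall_le_scaledSimplexPoint_iff ht,
    volume_setOf_le_and_sum_le hn, Fin.sum_univ_castSucc, mul_add, Finset.mul_sum,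
    ← ENNReal.ofReal_natCast, ← ENNReal.ofReal_mul (Nat.cast_nonneg _)]
  congr 1
  rw [mul_div_cancel₀ _ (Nat.cast_ne_zero.2 n.factorial_ne_zero)]
  ring_nf

lemma measurable_archimedeanLaw_map {ψ : ℝ → ℝ} (hψ : Measurable ψ) :
    Measurable fun p : ℝ × (Fin n → ℝ) => fun j => ψ (scaledSimplexPoint n p j) :=
  measurable_pi_lambda _ fun j =>
    hψ.comp ((measurable_pi_apply j).comp measurable_scaledSimplexPoint)

lemma isProbabilityMeasure_archimedeanLaw {ψ : ℝ → ℝ} {γ : Measure ℝ} [IsProbabilityMeasure γ]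
    (hψ : Measurable ψ) : IsProbabilityMeasure (archimedeanLaw n ψ γ) :=
  Measure.isProbabilityMeasure_map (measurable_archimedeanLaw_map hψ).aemeasurable

lemma uniformSimplex_preimage_pi_Icc {ψ : ℝ → ℝ} (hcont : ContinuousOn ψ (Ici 0))
    (hanti : AntitoneOn ψ (Ici 0)) (hnonneg : ∀ z, 0 ≤ ψ z) {x : Fin (n + 1) → ℝ}
    (hx : ∀ j, x j ≤ ψ 0) {t : ℝ} (ht : 0 < t) :
    uniformSimplex n (Prod.mk t ⁻¹' ((fun p j => ψ (scaledSimplexPoint n p j)) ⁻¹'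
      univ.pi fun j => Icc 0 (x j))) =
    uniformSimplex n {s | ∀ j, pseudoInv ψ (x j) ≤
      ENNReal.ofReal (scaledSimplexPoint n (t, s) j)} :=
  uniformSimplex_congr fun _ hs => mem_pi_Icc_iff_pseudoInv_le hcont hanti hnonneg hx
    fun j => (scaledSimplexPoint_mem_Icc ht hs j).1

lemma archimedeanLaw_williamson_pi_Icc {γ : Measure ℝ} [IsProbabilityMeasure γ]
    (h0 : γ (Iio 0) = 0) (hz : γ {0} = 0) (hn : n ≠ 0) {x : Fin (n + 1) → ℝ}
    (hx : ∀ j, x j ∈ Icc 0 1) :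
    archimedeanLaw n (williamson (n + 1) γ) γ (univ.pi fun j => Icc 0 (x j)) =
      ENNReal.ofReal (archCopula (n + 1) (williamson (n + 1) γ) x) := by
  have hmeas := measurable_archimedeanLaw_map (n := n) (measurable_williamson (d := n + 1) (γ := γ))
  have hbox : MeasurableSet (univ.pi fun j => Icc (0 : ℝ) (x j)) :=
    MeasurableSet.univ_pi fun _ => measurableSet_Icc
  have hslice (t : ℝ) (ht : 0 < t) :=
    uniformSimplex_preimage_pi_Icc (n := n) (continuousOn_williamson (d := n + 1) h0)
      (antitoneOn_williamson h0) williamson_nonneg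
      (fun j => (hx j).2.trans_eq williamson_zero.symm) ht
  set ψ := williamson (n + 1) γ
  rw [archimedeanLaw, Measure.map_apply hmeas hbox, Measure.prod_apply (hmeas hbox)]
  by_cases hfin : ∀ j, pseudoInv ψ (x j) ≠ ∞
  · set a := fun j => (pseudoInv ψ (x j)).toReal
    have ha : ∀ j, 0 ≤ a j := fun j => ENNReal.toReal_nonneg
    calc _ = ∫⁻ t, ENNReal.ofReal (max (1 - t * ∑ j, a j) 0 ^ n) ∂γ := by
          refine lintegral_congr_ae ?_
          filter_upwards [ae_pos_of_measure_Iio_zero h0 hz] with t ht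
          rw [hslice t ht, ← uniformSimplex_setOf_forall_le_scaledSimplexPoint hn ht ha]
          exact uniformSimplex_congr fun s hs => forall_congr' fun j =>
            ENNReal.le_ofReal_iff_toReal_le (hfin j) (scaledSimplexPoint_mem_Icc ht hs j).1
      _ = ENNReal.ofReal (ψ (∑ j, a j)) := by
          rw [← ofReal_integral_eq_lintegral_ofReal
            (integrable_max_one_sub_mul_pow h0 (Finset.sum_nonneg fun j _ => ha j) n)
            (Eventually.of_forall fun _ => by positivity)]
          rfl
      _ = _ := by
          have hsum : ∑ j, pseudoInv ψ (x j) = ENNReal.ofReal (∑ j, a j) := by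
            rw [ENNReal.ofReal_sum_of_nonneg fun j _ => ha j]
            exact Finset.sum_congr rfl fun j _ => (ENNReal.ofReal_toReal (hfin j)).symm
          rw [archCopula, hsum, psiExt, if_neg ENNReal.ofReal_ne_top,
            ENNReal.toReal_ofReal (Finset.sum_nonneg fun j _ => ha j)]
  · obtain ⟨j, hj⟩ := not_forall_not.1 hfin
    have hsum : ∑ j, pseudoInv ψ (x j) = ∞ := ENNReal.sum_eq_top.2 ⟨j, Finset.mem_univ _, hj⟩
    rw [archCopula, hsum, psiExt, if_pos rfl, ENNReal.ofReal_zero, ← lintegral_zero]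
    refine lintegral_congr_ae ?_
    filter_upwards [ae_pos_of_measure_Iio_zero h0 hz] with t ht
    rw [hslice t ht, ← measure_empty (μ := uniformSimplex n)]
    congr 1
    exact eq_empty_of_forall_notMem fun s hs => by simpa [hj] using hs j

end Representation

section Uniqueness

variable {ι : Type*} [Fintype ι]

lemma ext_of_pi_Iic {μ ν : Measure (ι → ℝ)} [IsProbabilityMeasure μ] [IsProbabilityMeasure ν]
    (h : ∀ x : ι → ℝ, μ (univ.pi fun i => Iic (x i)) = ν (univ.pi fun i => Iic (x i))) :
    μ = ν := by
  have hspan : IsCountablySpanning (range (Iic : ℝ → Set ℝ)) :=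
    ⟨fun k : ℕ => Iic (k : ℝ), fun k => mem_range_self _,
      eq_univ_of_forall fun r => mem_iUnion.2 (exists_nat_ge r)⟩
  refine ext_of_generate_finite _ (generateFrom_eq_pi (fun _ =>
    (BorelSpace.measurable_eq.trans (borel_eq_generateFrom_Iic ℝ)).symm) fun _ => hspan).symm
    (IsPiSystem.pi fun _ => isPiSystem_Iic) ?_ (by simp)
  rintro _ ⟨g, hg, rfl⟩
  choose x hx using fun i => hg i (mem_univ i)
  simpa only [hx] using h x

lemma ext_of_pi_Icc_zero {μ ν : Measure (ι → ℝ)} [IsProbabilityMeasure μ]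
    [IsProbabilityMeasure ν] (hμ : μ (univ.pi fun _ => Icc 0 1) = 1)
    (h : ∀ x : ι → ℝ, (∀ i, x i ∈ Icc 0 1) →
      μ (univ.pi fun i => Icc 0 (x i)) = ν (univ.pi fun i => Icc 0 (x i))) : μ = ν := by
  set Q : Set (ι → ℝ) := univ.pi fun _ => Icc 0 1
  have hQ : MeasurableSet Q := MeasurableSet.univ_pi fun _ => measurableSet_Icc
  have hν : ν Q = 1 := (h (fun _ => 1) fun _ => ⟨zero_le_one, le_rfl⟩).symm.trans hμ
  refine ext_of_pi_Iic fun x => ?_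
  rw [← measure_inter_conull (prob_compl_eq_zero_iff hQ |>.2 hμ),
    ← measure_inter_conull (prob_compl_eq_zero_iff hQ |>.2 hν)]
  by_cases hx : ∀ i, 0 ≤ x i
  · have hset : (univ.pi fun i => Iic (x i)) ∩ Q = univ.pi fun i => Icc 0 (min (x i) 1) := by
      rw [← pi_inter_distrib]
      congr! with i
      ext y
      simp only [mem_inter_iff, mem_Iic, mem_Icc, le_min_iff]
      tauto
    rw [hset]
    exact h _ fun i => ⟨le_min (hx i) zero_le_one, min_le_right _ _⟩
  · obtain ⟨i, hi⟩ := not_forall.1 hx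
    have hset : (univ.pi fun i => Iic (x i)) ∩ Q = ∅ :=
      eq_empty_of_forall_notMem fun y hy => hi ((hy.2 i (mem_univ i)).1.trans (hy.1 i (mem_univ i)))
    rw [hset, measure_empty, measure_empty]

end Uniqueness

section AbsoluteContinuity

open scoped Pointwise

variable {n : ℕ}

lemma volume_inv_preimage_eq_zero {B : Set ℝ} (hB : volume B = 0) :
    volume ((fun t : ℝ => t⁻¹) ⁻¹' B) = 0 := by
  have hsub : (fun t : ℝ => t⁻¹) ⁻¹' B ⊆ (fun t : ℝ => t⁻¹) '' (B \ {0}) ∪ {0} := by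
    intro t ht
    by_cases h : t = 0
    · exact Or.inr h
    · exact Or.inl ⟨t⁻¹, ⟨ht, inv_ne_zero h⟩, inv_inv t⟩
  refine measure_mono_null hsub (measure_union_null ?_ Real.volume_singleton)
  exact addHaar_image_eq_zero_of_differentiableOn_of_addHaar_eq_zero _
    (fun t ht => (differentiableAt_inv ht.2).differentiableWithinAt)
    (measure_mono_null sdiff_subset hB)

lemma ae_volume_snoc_mem_eq_zero {M : Set (Fin (n + 1) → ℝ)} (hM : volume M = 0) :
    ∀ᵐ r, volume {y : Fin n → ℝ | Fin.snoc y r ∈ M} = 0 := by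
  filter_upwards [Measure.measure_ae_null_of_prod_null
    ((measurePreserving_snocEquiv_symm n).quasiMeasurePreserving.preimage_null hM)] with r hr
  simpa [Set.preimage, snocEquiv_symm_apply] using hr

lemma measurable_snoc_inv_smul :
    Measurable fun p : ℝ × (Fin n → ℝ) => (Fin.snoc (p.1⁻¹ • p.2) p.1⁻¹ : Fin (n + 1) → ℝ) := by
  simp_rw [← snocEquiv_symm_apply]
  exact (snocEquiv n).symm.measurable.comp <|
    measurable_fst.inv.prodMk (measurable_fst.inv.smul measurable_snd)

lemma absolutelyContinuous_map_snoc_inv_smul {γ : Measure ℝ} {σ : Measure (Fin n → ℝ)}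
    [SFinite γ] [SFinite σ] (hγ : γ ≪ volume) (hσ : σ ≪ volume) :
    (γ.prod σ).map (fun p => (Fin.snoc (p.1⁻¹ • p.2) p.1⁻¹ : Fin (n + 1) → ℝ)) ≪ volume := by
  refine Measure.AbsolutelyContinuous.mk fun M hM hMnull => ?_
  rw [Measure.map_apply measurable_snoc_inv_smul hM,
    Measure.prod_apply (measurable_snoc_inv_smul hM)]
  have hgood : ∀ᵐ t ∂γ, t ≠ 0 ∧ volume {y : Fin n → ℝ | Fin.snoc y t⁻¹ ∈ M} = 0 :=
    hγ.ae_le <| (measure_eq_zero_iff_ae_notMem.1 Real.volume_singleton).and <|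
      ae_iff.2 (volume_inv_preimage_eq_zero (ae_iff.1 (ae_volume_snoc_mem_eq_zero hMnull)))
  refine (lintegral_congr_ae ?_).trans lintegral_zero
  filter_upwards [hgood] with t ⟨ht, hnull⟩
  have hslice : Prod.mk t ⁻¹' ((fun p : ℝ × (Fin n → ℝ) =>
      (Fin.snoc (p.1⁻¹ • p.2) p.1⁻¹ : Fin (n + 1) → ℝ)) ⁻¹' M) =
      t • {y : Fin n → ℝ | Fin.snoc y t⁻¹ ∈ M} := by
    ext s
    rw [mem_smul_set_iff_inv_smul_mem₀ ht]
    rfl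
  rw [hslice]
  exact hσ (by rw [Measure.addHaar_smul, hnull, mul_zero])

lemma lipschitzOnWith_comp_pi {ι : Type*} [Fintype ι] {f : ℝ → ℝ} {K : ℝ≥0} {s : Set ℝ}
    (hf : LipschitzOnWith K f s) :
    LipschitzOnWith K (fun x : ι → ℝ => fun i => f (x i)) (univ.pi fun _ => s) :=
  LipschitzOnWith.of_dist_le_mul fun x hx y hy => (dist_pi_le_iff (by positivity)).2 fun i =>
    (hf.dist_le_mul (x i) (hx i trivial) (y i) (hy i trivial)).trans
      (mul_le_mul_of_nonneg_left (dist_le_pi_dist x y i) K.coe_nonneg)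

lemma volume_image_eq_zero_of_lipschitzOnWith {ι : Type*} [Fintype ι]
    {f : (ι → ℝ) → ι → ℝ} {K : ℝ≥0} {s : Set (ι → ℝ)} (hf : LipschitzOnWith K f s)
    (hs : volume s = 0) : volume (f '' s) = 0 := by
  have := hf.hausdorffMeasure_image_le (Nat.cast_nonneg (Fintype.card ι))
  rw [hausdorffMeasure_pi_real, hs, mul_zero] at this
  exact nonpos_iff_eq_zero.1 this

def sumLast (n : ℕ) : (Fin (n + 1) → ℝ) →L[ℝ] Fin (n + 1) → ℝ :=
  ContinuousLinearMap.pi fun j =>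
    if j = Fin.last n then ∑ i, ContinuousLinearMap.proj i else ContinuousLinearMap.proj j

lemma sumLast_scaledSimplexPoint (p : ℝ × (Fin n → ℝ)) :
    sumLast n (scaledSimplexPoint n p) = Fin.snoc (p.1⁻¹ • p.2) p.1⁻¹ := by
  ext j
  induction j using Fin.lastCases with
  | last =>
    simp [sumLast, scaledSimplexPoint, Fin.sum_univ_castSucc]
  | cast i =>
    simp [sumLast, scaledSimplexPoint, (Fin.castSucc_lt_last i).ne]

variable {ψ : ℝ → ℝ} {γ : Measure ℝ}

/-- On the event `R ≤ b`, where `ψ` decreases at a uniform rate, `R S` is recovered from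
`ψ (R S)` through the Lipschitz map `φ`. -/
lemma measure_preimage_inter_inv_le_eq_zero [SFinite γ] (hcont : ContinuousOn ψ (Ici 0))
    (hanti : AntitoneOn ψ (Ici 0)) {b c : ℝ} (hb : 0 ≤ b) (hc : 0 < c)
    (hdec : ∀ u v, 0 ≤ u → u ≤ v → v ≤ b → c * (v - u) ≤ ψ u - ψ v) (hac : γ ≪ volume)
    {N : Set (Fin (n + 1) → ℝ)} (hN : volume N = 0) :
    (γ.prod (uniformSimplex n)) ((fun p j => ψ (scaledSimplexPoint n p j)) ⁻¹' N ∩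
      {p | 0 < p.1 ∧ p.1⁻¹ ≤ b ∧ p.2 ∈ solidSimplex n 1}) = 0 := by
  set box : Set (Fin (n + 1) → ℝ) := univ.pi fun _ => Icc (ψ b) (ψ 0)
  set recover := fun y : Fin (n + 1) → ℝ => sumLast n fun j => (pseudoInv ψ (y j)).toReal
  have hZ : volume (recover '' (N ∩ box)) = 0 :=
    volume_image_eq_zero_of_lipschitzOnWith ((sumLast n).lipschitz.comp_lipschitzOnWith
      ((lipschitzOnWith_comp_pi (lipschitzOnWith_pseudoInv hcont hanti hb hc hdec)).mono
        inter_subset_right)) (measure_mono_null inter_subset_left hN)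
  refine measure_mono_null ?_ (Measure.preimage_null_of_map_null
    measurable_snoc_inv_smul.aemeasurable
    (absolutelyContinuous_map_snoc_inv_smul hac (uniformSimplex_absolutelyContinuous n) hZ))
  rintro ⟨t, s⟩ ⟨hpN, ht, htb, hs⟩
  set v := scaledSimplexPoint n (t, s)
  have hv : ∀ j, v j ∈ Icc 0 b := fun j =>
    ⟨(scaledSimplexPoint_mem_Icc ht hs j).1, (scaledSimplexPoint_mem_Icc ht hs j).2.trans htb⟩
  have hrec : (fun j => (pseudoInv ψ (ψ (v j))).toReal) = v := by
    funext j
    rw [pseudoInv_apply_eq_ofReal hcont (hv j).1 fun u hu huv => ?_,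
      ENNReal.toReal_ofReal (hv j).1]
    nlinarith [hdec u _ hu huv.le (hv j).2]
  refine ⟨fun j => ψ (v j), ⟨hpN, fun j _ => ⟨hanti (hv j).1 hb (hv j).2,
    hanti self_mem_Ici (hv j).1 (hv j).1⟩⟩, ?_⟩
  simp only [recover, hrec]
  exact sumLast_scaledSimplexPoint (t, s)

theorem archimedeanLaw_absolutelyContinuous [SFinite γ] (hmeas : Measurable ψ)
    (hcont : ContinuousOn ψ (Ici 0)) (hanti : AntitoneOn ψ (Ici 0))
    (hdec : ∀ b, 0 < b → 0 < ψ b →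
      ∃ c > 0, ∀ u v, 0 ≤ u → u ≤ v → v ≤ b → c * (v - u) ≤ ψ u - ψ v)
    (hac : γ ≪ volume) (hpos : ∀ᵐ t ∂γ, 0 < t ∧ 0 < ψ t⁻¹) :
    archimedeanLaw n ψ γ ≪ volume := by
  refine Measure.AbsolutelyContinuous.mk fun N hN hNnull => ?_
  rw [archimedeanLaw, Measure.map_apply (measurable_archimedeanLaw_map hmeas) hN]
  set G : ℚ → Set (ℝ × (Fin n → ℝ)) := fun q =>
    {p | 0 < p.1 ∧ p.1⁻¹ ≤ q ∧ p.2 ∈ solidSimplex n 1}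
  have hcover : ∀ᵐ p ∂(γ.prod (uniformSimplex n)),
      ∃ q : {q : ℚ // 0 < (q : ℝ) ∧ 0 < ψ q}, p ∈ G q := by
    filter_upwards [Measure.quasiMeasurePreserving_fst.ae hpos,
      Measure.quasiMeasurePreserving_snd.ae (ae_mem_solidSimplex n)] with p ⟨ht, hψt⟩ hs
    obtain ⟨q, hq, hψq⟩ := exists_rat_ge_apply_pos hcont hanti (inv_pos.2 ht) hψt
    exact ⟨⟨q, (inv_pos.2 ht).trans_le hq, hψq⟩, ht, hq, hs⟩
  refine measure_mono_null_ae (t := ⋃ q : {q : ℚ // 0 < (q : ℝ) ∧ 0 < ψ q},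
    (fun p j => ψ (scaledSimplexPoint n p j)) ⁻¹' N ∩ G q) ?_ (measure_iUnion_null fun q => ?_)
  · filter_upwards [hcover] with p ⟨q, hq⟩ hpN
    exact mem_iUnion.2 ⟨q, hpN, hq⟩
  · obtain ⟨c, hc, hdec_q⟩ := hdec q q.2.1 q.2.2
    exact measure_preimage_inter_inv_le_eq_zero hcont hanti q.2.1.le hc hdec_q hac hNnull

end AbsoluteContinuity

/-- If `γ ∈ P_{W_d}` is absolutely continuous w.r.t. Lebesgue measure,
then the measure `μ_C` of the Archimedean copula `C = C_{W_d γ}` is absolutely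
continuous w.r.t. Lebesgue measure on `[0,1]^d`. -/
theorem archCopula_absolutelyContinuous_of_williamson_ac
    (d : ℕ) (hd : 3 ≤ d) (γ : Measure ℝ) (hγ : memPW d γ) (hac : γ ≪ volume)
    (μ : Measure (Fin d → ℝ)) (hprob : IsProbabilityMeasure μ)
    (hμ : ∀ x : Fin d → ℝ, (∀ i, x i ∈ Icc (0 : ℝ) 1) →
      μ (Set.univ.pi fun i => Icc 0 (x i)) =
        ENNReal.ofReal (archCopula d (williamson d γ) x)) :
    μ ≪ volume := by
  obtain ⟨hγprob, h0, hz, -⟩ := hγ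
  obtain ⟨n, rfl⟩ : ∃ n, d = n + 1 := ⟨d - 1, by omega⟩
  have hcube : μ (univ.pi fun _ => Icc 0 1) = 1 := by
    simpa [archCopula_one williamson_zero] using hμ (fun _ => 1) fun _ => ⟨zero_le_one, le_rfl⟩
  have : IsProbabilityMeasure (archimedeanLaw n (williamson (n + 1) γ) γ) :=
    isProbabilityMeasure_archimedeanLaw measurable_williamson
  have hμ_eq : μ = archimedeanLaw n (williamson (n + 1) γ) γ :=
    ext_of_pi_Icc_zero hcube fun x hx =>
      (hμ x hx).trans (archimedeanLaw_williamson_pi_Icc h0 hz (by omega) hx).symm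
  rw [hμ_eq]
  exact archimedeanLaw_absolutelyContinuous measurable_williamson (continuousOn_williamson h0)
    (antitoneOn_williamson h0) (fun b hb => exists_pos_mul_sub_le_williamson_sub h0 hz hd hb) hac
    (ae_pos_and_williamson_inv_pos h0 hac (by omega))
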